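/- arXiv:2309.15499 — 2 statements merged into one kernel-verified Lean document; each statement's English description precedes it below -/
import Mathlib

section
/- Fix σ > 0 and points a₁,…,a_N ∈ ℝ, and consider the function F(ν, τ) = (1/N) Σ_{i=1}^N KL(N(a_i, σ²) ‖ N(ν, τ²)) over ν ∈ ℝ, τ > 0. Then F is minimized at ν* = (1/N) Σ_i a_i and τ*² = σ² + (1/N) Σ_i (a_i − ν*)², i.e., for all ν ∈ ℝ, τ > 0, F(ν*, τ*) ≤ F(ν, τ). -/
open scoped BigOperators

/-- Closed form of the KL divergence `KL(N(μ₁, v₁) ‖ N(μ₂, v₂))` between univariate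
Gaussians with means `μ₁, μ₂` and variances `v₁, v₂`. -/
noncomputable def klGauss (μ₁ v₁ μ₂ v₂ : ℝ) : ℝ :=
  (1 / 2) * (Real.log (v₂ / v₁) + (v₁ + (μ₁ - μ₂) ^ 2) / v₂ - 1)

/-!
Averaged over `i`, `KL(N(aᵢ, σ²) ‖ N(ν, τ²))` equals `KL(N(ν*, τ*²) ‖ N(ν, τ²))` plus a
constant independent of `(ν, τ)`: the means enter only through `𝔼 (aᵢ - ν)²`, which the
bias–variance decomposition rewrites as `(τ*² - σ²) + (ν* - ν)²`. The Gaussian KL divergence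
is nonnegative (from `log x ≤ x - 1`) and vanishes on the diagonal, so `(ν*, τ*²)` is a
minimizer.
-/

open Finset Real

theorem klGauss_self (μ : ℝ) {v : ℝ} (hv : v ≠ 0) : klGauss μ v μ v = 0 := by
  simp [klGauss, hv]

theorem klGauss_nonneg (μ₁ μ₂ : ℝ) {v₁ v₂ : ℝ} (hv₁ : 0 < v₁) (hv₂ : 0 < v₂) :
    0 ≤ klGauss μ₁ v₁ μ₂ v₂ := by
  have hlog : log (v₁ / v₂) ≤ v₁ / v₂ - 1 := log_le_sub_one_of_pos (by positivity)
  rw [← neg_neg (log (v₁ / v₂)), ← log_inv, inv_div] at hlog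
  have : 0 ≤ (μ₁ - μ₂) ^ 2 / v₂ := by positivity
  unfold klGauss
  rw [add_div]
  linarith

theorem klGauss_eq_add (x v μ t : ℝ) :
    klGauss x v μ t = (1 / 2) * (log (t / v) + v / t - 1) + (x - μ) ^ 2 / (2 * t) := by
  unfold klGauss
  ring

section Average

variable {ι : Type*} [Fintype ι] [Nonempty ι]

theorem expect_sub_sq_eq_add (a : ι → ℝ) (c : ℝ) :
    𝔼 i, (a i - c) ^ 2 = 𝔼 i, (a i - 𝔼 j, a j) ^ 2 + (𝔼 j, a j - c) ^ 2 := by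
  set m := 𝔼 j, a j
  have hcentered : 𝔼 i, (a i - m) = 0 := by
    rw [expect_sub_distrib, Fintype.expect_const, sub_self]
  calc 𝔼 i, (a i - c) ^ 2
      = 𝔼 i, ((a i - m) ^ 2 + 2 * (m - c) * (a i - m) + (m - c) ^ 2) :=
        expect_congr rfl fun i _ => by ring
    _ = 𝔼 i, (a i - m) ^ 2 + (m - c) ^ 2 := by
        rw [expect_add_distrib, expect_add_distrib, ← mul_expect, hcentered,
          Fintype.expect_const, mul_zero, add_zero]

theorem expect_klGauss (a : ι → ℝ) {v : ℝ} (hv : 0 < v) (μ : ℝ) {t : ℝ} (ht : t ≠ 0) :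
    𝔼 i, klGauss (a i) v μ t =
      klGauss (𝔼 j, a j) (v + 𝔼 j, (a j - 𝔼 k, a k) ^ 2) μ t +
        (1 / 2) * log ((v + 𝔼 j, (a j - 𝔼 k, a k) ^ 2) / v) := by
  set s := 𝔼 j, (a j - 𝔼 k, a k) ^ 2
  have hvs : v + s ≠ 0 := by positivity
  simp only [klGauss_eq_add _ v, expect_add_distrib, Fintype.expect_const, ← expect_div,
    expect_sub_sq_eq_add a μ]
  rw [klGauss_eq_add, log_div ht hv.ne', log_div ht hvs, log_div hvs hv.ne']
  ring

end Average

/-- The Gaussian prior minimizing the average KL divergence to `N` Gaussians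
`N(aᵢ, σ²)` has mean `ν* = (1/N) ∑ aᵢ` and variance `τ*² = σ² + (1/N) ∑ (aᵢ - ν*)²`. -/
theorem optimal_gaussian_prior (N : ℕ) (hN : 0 < N) (σ : ℝ) (hσ : 0 < σ)
    (a : Fin N → ℝ) :
    ∀ (ν τ : ℝ), 0 < τ →
      (1 / (N : ℝ)) * ∑ i, klGauss (a i) (σ ^ 2)
          ((1 / (N : ℝ)) * ∑ j, a j)
          (σ ^ 2 + (1 / (N : ℝ)) * ∑ j, (a j - (1 / (N : ℝ)) * ∑ k, a k) ^ 2)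
        ≤ (1 / (N : ℝ)) * ∑ i, klGauss (a i) (σ ^ 2) ν (τ ^ 2) := by
  intro ν τ hτ
  have : Nonempty (Fin N) := Fin.pos_iff_nonempty.mp hN
  have average_eq_expect (f : Fin N → ℝ) : 1 / (N : ℝ) * ∑ i, f i = 𝔼 i, f i := by
    rw [Fintype.expect_eq_sum_div_card, Fintype.card_fin, one_div_mul_eq_div]
  simp only [average_eq_expect]
  set s := 𝔼 j, (a j - 𝔼 k, a k) ^ 2
  have hσs : 0 < σ ^ 2 + s := by positivity
  rw [expect_klGauss a (by positivity) _ hσs.ne',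
    expect_klGauss a (by positivity) _ (by positivity), klGauss_self _ hσs.ne']
  gcongr
  exact klGauss_nonneg _ _ hσs (by positivity)
end

section
/- Let a₁,…,a_N ∈ ℝ with |a_i| ≤ B, σ > 0, ν* = (1/N)Σ a_i, and τ*² = σ² + (1/N)Σ(a_i − ν*)². Then (1/N) Σ_{i=1}^N KL(N(a_i, σ²) ‖ N(ν*, τ*²)) ≤ (1/2) log((σ² + B²)/σ²). -/
open scoped BigOperators

/-- Averaged KL bound: the average KL divergence from the client Gaussians to the
optimal prior is at most `(1/2) log((σ² + B²)/σ²)`. -/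
theorem avg_kl_to_optimal_prior_bound (N : ℕ) (hN : 0 < N) (B σ : ℝ) (hσ : 0 < σ)
    (a : Fin N → ℝ) (hB : ∀ i, |a i| ≤ B) :
    (1 / (N : ℝ)) * ∑ i, klGauss (a i) (σ ^ 2)
        ((1 / (N : ℝ)) * ∑ j, a j)
        (σ ^ 2 + (1 / (N : ℝ)) * ∑ j, (a j - (1 / (N : ℝ)) * ∑ k, a k) ^ 2)
      ≤ (1 / 2) * Real.log ((σ ^ 2 + B ^ 2) / σ ^ 2) := by
  have hNpos : (0 : ℝ) < N := by exact_mod_cast hN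
  set μ : ℝ := (1 / (N : ℝ)) * ∑ j, a j with hμ
  set V : ℝ := (1 / (N : ℝ)) * ∑ j, (a j - μ) ^ 2 with hV
  have hV0 : 0 ≤ V := by
    apply mul_nonneg (by positivity)
    exact Finset.sum_nonneg fun j _ => sq_nonneg _
  have hσ2 : (0 : ℝ) < σ ^ 2 := by positivity
  have hτ : (0 : ℝ) < σ ^ 2 + V := by linarith
  have hsumsq : ∑ j, (a j - μ) ^ 2 = (N : ℝ) * V := by
    rw [hV]; field_simp
  -- compute the average exactly
  have key : ∑ i, klGauss (a i) (σ ^ 2) μ (σ ^ 2 + V)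
      = (N : ℝ) * ((1 / 2) * Real.log ((σ ^ 2 + V) / σ ^ 2)) := by
    unfold klGauss
    have : ∀ i : Fin N, (1 / 2 : ℝ) * (Real.log ((σ ^ 2 + V) / σ ^ 2)
          + (σ ^ 2 + (a i - μ) ^ 2) / (σ ^ 2 + V) - 1)
        = ((1 / 2) * Real.log ((σ ^ 2 + V) / σ ^ 2)
            + ((1 / 2) * (σ ^ 2 / (σ ^ 2 + V)) - 1 / 2))
          + (a i - μ) ^ 2 * (1 / (2 * (σ ^ 2 + V))) := by
      intro i
      field_simp
      ring
    rw [Finset.sum_congr rfl fun i _ => this i, Finset.sum_add_distrib,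
      Finset.sum_const, ← Finset.sum_mul, hsumsq]
    simp only [Finset.card_univ, Fintype.card_fin, nsmul_eq_mul]
    field_simp
    ring
  rw [key]
  have havg : (1 / (N : ℝ)) * ((N : ℝ) * ((1 / 2) * Real.log ((σ ^ 2 + V) / σ ^ 2)))
      = (1 / 2) * Real.log ((σ ^ 2 + V) / σ ^ 2) := by
    field_simp
  rw [havg]
  -- V ≤ B²
  have hVB : V ≤ B ^ 2 := by
    have hsum_a : ∑ j, a j = (N : ℝ) * μ := by rw [hμ]; field_simp
    have h1 : ∑ j, (a j - μ) ^ 2 = (∑ j, (a j) ^ 2) - (N : ℝ) * μ ^ 2 := by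
      have : ∀ j : Fin N, (a j - μ) ^ 2 = (a j) ^ 2 - 2 * μ * a j + μ ^ 2 := by
        intro j; ring
      rw [Finset.sum_congr rfl fun j _ => this j]
      rw [Finset.sum_add_distrib, Finset.sum_sub_distrib, ← Finset.mul_sum,
        hsum_a, Finset.sum_const, Finset.card_univ, Fintype.card_fin, nsmul_eq_mul]
      ring
    have h2 : ∑ j, (a j) ^ 2 ≤ (N : ℝ) * B ^ 2 := by
      calc ∑ j, (a j) ^ 2 ≤ ∑ j : Fin N, B ^ 2 := by
            apply Finset.sum_le_sum
            intro j _
            exact sq_le_sq' (by linarith [abs_le.mp (hB j) |>.1]) (abs_le.mp (hB j) |>.2)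
        _ = (N : ℝ) * B ^ 2 := by
            rw [Finset.sum_const, Finset.card_univ, Fintype.card_fin, nsmul_eq_mul]
    have h3 : ∑ j, (a j - μ) ^ 2 ≤ (N : ℝ) * B ^ 2 := by
      rw [h1]
      nlinarith [sq_nonneg μ]
    calc V = (1 / (N : ℝ)) * ∑ j, (a j - μ) ^ 2 := rfl
      _ ≤ (1 / (N : ℝ)) * ((N : ℝ) * B ^ 2) :=
          mul_le_mul_of_nonneg_left h3 (by positivity)
      _ = B ^ 2 := by field_simp
  have hlog : Real.log ((σ ^ 2 + V) / σ ^ 2) ≤ Real.log ((σ ^ 2 + B ^ 2) / σ ^ 2) := by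
    apply Real.log_le_log (by positivity)
    gcongr
  linarith
end
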